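/- arXiv:2005.07912 — 5 statements merged into one kernel-verified Lean document; each statement's English description precedes it below -/
import Mathlib

section
/- Every strongly meager subset of 2^ω is meager. -/
open MeasureTheory

namespace CantorSMZ

instance : TopologicalSpace (ZMod 2) := ⊥
instance : DiscreteTopology (ZMod 2) := ⟨rfl⟩
instance : MeasurableSpace (ZMod 2) := ⊤
instance : BorelSpace (ZMod 2) := ⟨borel_eq_top_of_discrete.symm⟩

/-- Cantor space `2^ω`, with coordinatewise addition mod 2 as group operation. -/
abbrev Cantor : Type := ℕ → ZMod 2

/-- The fair-coin product measure on `2^ω`: the normalized Haar measure on the compact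
group `2^ω` (this is exactly the product of the uniform measures on each coordinate). -/
noncomputable def Lb : Measure Cantor := Measure.addHaarMeasure ⊤

/-- The basic clopen set of all extensions of the finite binary string `s`. -/
def cyl (s : List (ZMod 2)) : Set Cantor := {x | ∀ i < s.length, x i = s.getD i 0}

/-- `X ⊆ 2^ω` has strong measure zero. -/
def SMZ (X : Set Cantor) : Prop :=
  ∀ f : ℕ → ℕ, ∃ σ : ℕ → List (ZMod 2), (∀ n, (σ n).length = f n) ∧ X ⊆ ⋃ n, cyl (σ n)

/-- `X ⊆ 2^ω` is strongly meager. -/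
def StronglyMeager (X : Set Cantor) : Prop :=
  ∀ N : Set Cantor, Lb N = 0 → ∃ t : Cantor, ((fun x => x + t) '' X) ∩ N = ∅

/-! Since `Lb` is outer regular and has no atoms, a countable dense set is contained in open sets
of arbitrarily small measure; their intersection is a dense `Gδ` null set `N`. If `X + t` misses
`N`, then `X` lies in the meagre set `Nᶜ - t`. -/

open Filter Topology TopologicalSpace

theorem exists_mem_residual_measure_eq_zero {X : Type*} [TopologicalSpace X] [SeparableSpace X]
    [MeasurableSpace X] (μ : Measure X) [μ.OuterRegular] [NullSingletonClass μ] :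
    ∃ s ∈ residual X, μ s = 0 := by
  obtain ⟨D, hD_countable, hD_dense⟩ := exists_countable_dense X
  have hU : ∀ n : ℕ, ∃ U ⊇ D, IsOpen U ∧ μ U < (n : ENNReal)⁻¹ := fun n =>
    Set.exists_isOpen_lt_of_lt D _ <|
      (hD_countable.measure_zero μ).symm ▸ ENNReal.inv_pos.2 (ENNReal.natCast_ne_top n)
  choose U hDU hU_open hU_small using hU
  refine ⟨⋂ n, U n, countable_iInter_mem.2 fun n =>
    residual_of_dense_open (hU_open n) (hD_dense.mono (hDU n)), ?_⟩
  by_contra h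
  obtain ⟨n, hn⟩ := ENNReal.exists_inv_nat_lt h
  exact (hn.trans_le (measure_mono (Set.iInter_subset U n))).not_gt (hU_small n)

theorem isMeagre_of_image_add_const_inter_eq_empty {G : Type*} [TopologicalSpace G] [AddGroup G]
    [IsTopologicalAddGroup G] {X N : Set G} (hN : N ∈ residual G) {t : G}
    (hXN : ((fun x => x + t) '' X) ∩ N = ∅) : IsMeagre X := by
  have hX : X ⊆ (fun x => x + t) ⁻¹' Nᶜ := fun x hx hxN =>
    (Set.eq_empty_iff_forall_notMem.1 hXN) _ ⟨Set.mem_image_of_mem _ hx, hxN⟩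
  refine IsMeagre.mono hX (IsMeagre.preimage_of_isOpenMap (continuous_add_const t)
    (isOpenMap_add_right t) ?_)
  rwa [IsMeagre, compl_compl]

instance : (𝓝[≠] (0 : Cantor)).NeBot := by
  have : Tendsto (fun n => (Pi.single n 1 : Cantor)) atTop (𝓝[≠] 0) := by
    refine tendsto_nhdsWithin_iff.2 ⟨tendsto_pi_nhds.2 fun i => ?_, .of_forall fun n => by simp⟩
    exact tendsto_const_nhds.congr' ((eventually_gt_atTop i).mono fun n hn => by simp [hn.ne])
  exact this.neBot

instance : Lb.OuterRegular := by unfold Lb; infer_instance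

instance : NullSingletonClass Lb := by unfold Lb; infer_instance

/-- Every strongly meager subset of `2^ω` is meager. -/
theorem stronglyMeager_isMeagre (X : Set Cantor) (hX : StronglyMeager X) : IsMeagre X := by
  obtain ⟨N, hN, hN_null⟩ := exists_mem_residual_measure_eq_zero Lb
  obtain ⟨t, ht⟩ := hX N hN_null
  exact isMeagre_of_image_add_const_inter_eq_empty hN ht

end CantorSMZ
end

section
/- If X ⊆ 2^ω has strong measure zero, then for every dense open set U ⊆ 2^ω there exists x ∈ 2^ω such that x + X ⊆ U. (Easy direction toward Galvin–Mycielski–Solovay for a single dense open set.) -/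
open MeasureTheory

/-!
Fix cut points `0 = n₀ < n₁ < ⋯` such that every string of length `nₖ` extends to a string
of length `nₖ₊₁` whose cylinder lies in `U`; they exist because `U` is dense open and `2^ω` is
compact. Strong measure zero covers `X` by cylinders `[σₖ]` with `|σₖ| = nₖ₊₁`. Build `x` block
by block: on `[nₖ, nₖ₊₁)` choose it so that `x ↾ nₖ₊₁ + σₖ` is the extension of
`x ↾ nₖ + σₖ ↾ nₖ` given by the choice of cut points. Then `x + [σₖ] ⊆ U` for every `k`.
-/

open PiNat

section Cylinders

variable {E : ℕ → Type*}

lemma PiNat.add_mem_cylinder_add [∀ i, Add (E i)] {a a' b b' : ∀ i, E i} {n : ℕ}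
    (ha : a ∈ cylinder a' n) (hb : b ∈ cylinder b' n) : a + b ∈ cylinder (a' + b') n :=
  fun i hi => by simp [ha i hi, hb i hi]

lemma PiNat.sub_mem_cylinder_sub [∀ i, Sub (E i)] {a a' b b' : ∀ i, E i} {n : ℕ}
    (ha : a ∈ cylinder a' n) (hb : b ∈ cylinder b' n) : a - b ∈ cylinder (a' - b') n :=
  fun i hi => by simp [ha i hi, hb i hi]

lemma PiNat.exists_forall_mem_cylinder {x : ℕ → ∀ i, E i} {n : ℕ → ℕ} (hn : StrictMono n)
    (hx : ∀ k, x (k + 1) ∈ cylinder (x k) (n k)) : ∃ z, ∀ k, z ∈ cylinder (x k) (n k) := by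
  have coherent : ∀ k l, k ≤ l → x l ∈ cylinder (x k) (n k) := by
    intro k l hkl
    induction l, hkl using Nat.le_induction with
    | base => exact self_mem_cylinder _ _
    | succ l hkl ih =>
      rw [mem_cylinder_iff_eq] at ih ⊢
      rw [← ih]
      exact mem_cylinder_iff_eq.1 (cylinder_anti _ (hn.monotone hkl) (hx l))
  refine ⟨fun i => x (i + 1) i, fun k i hi => ?_⟩
  rcases le_total (i + 1) k with h | h
  · exact (coherent (i + 1) k h i ((Nat.lt_succ_self i).trans_le hn.le_apply)).symm
  · exact coherent k (i + 1) h i hi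

lemma PiNat.exists_add_cylinder_subset [∀ i, AddGroup (E i)] {U : Set (∀ i, E i)}
    {n : ℕ → ℕ} (hn : StrictMono n)
    (hU : ∀ k z, ∃ w ∈ cylinder z (n k), cylinder w (n (k + 1)) ⊆ U) (y : ℕ → ∀ i, E i) :
    ∃ x, ∀ k, (fun v => x + v) '' cylinder (y k) (n (k + 1)) ⊆ U := by
  choose w hwz hwU using hU
  let stage : ℕ → ∀ i, E i := fun k => Nat.rec 0 (fun k s => w k (s + y k) - y k) k
  have stage_succ : ∀ k, stage (k + 1) = w k (stage k + y k) - y k := fun _ => rfl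
  obtain ⟨x, hx⟩ := exists_forall_mem_cylinder hn (x := stage) fun k => by
    simpa [stage_succ] using
      sub_mem_cylinder_sub (hwz k (stage k + y k)) (self_mem_cylinder (y k) (n k))
  refine ⟨x, fun k => ?_⟩
  rintro _ ⟨v, hv, rfl⟩
  apply hwU k (stage k + y k)
  simpa [stage_succ] using add_mem_cylinder_add (hx (k + 1)) hv

variable [∀ i, TopologicalSpace (E i)] [∀ i, DiscreteTopology (E i)]

lemma IsOpen.exists_cylinder_subset {U : Set (∀ i, E i)} (hU : IsOpen U) {w : ∀ i, E i}
    (hw : w ∈ U) : ∃ m, cylinder w m ⊆ U := by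
  obtain ⟨m, hm⟩ := exists_disjoint_cylinder hU.isClosed_compl (Set.notMem_compl_iff.2 hw)
  exact ⟨m, Set.disjoint_compl_left_iff_subset.1 hm⟩

lemma Dense.exists_cylinder_subset_of_isOpen {U : Set (∀ i, E i)} (hUd : Dense U)
    (hU : IsOpen U) (z : ∀ i, E i) (n : ℕ) :
    ∃ w ∈ cylinder z n, ∃ m, cylinder w m ⊆ U := by
  obtain ⟨w, hwz, hwU⟩ :=
    hUd.inter_open_nonempty _ (isOpen_cylinder E z n) ⟨z, self_mem_cylinder z n⟩
  exact ⟨w, hwz, hU.exists_cylinder_subset hwU⟩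

lemma Dense.exists_uniform_cylinder_subset_of_isOpen [CompactSpace (∀ i, E i)]
    {U : Set (∀ i, E i)} (hUd : Dense U) (hU : IsOpen U) (n : ℕ) :
    ∃ m, n < m ∧ ∀ z, ∃ w ∈ cylinder z n, cylinder w m ⊆ U := by
  choose w hwz m hmU using hUd.exists_cylinder_subset_of_isOpen hU
  obtain ⟨t, ht⟩ := CompactSpace.elim_nhds_subcover (fun z => cylinder z n)
    fun z => (isOpen_cylinder E z n).mem_nhds (self_mem_cylinder z n)
  refine ⟨max (n + 1) (t.sup fun z => m z n), by omega, fun z => ?_⟩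
  obtain ⟨z₀, hz₀t, hzz₀⟩ := Set.mem_iUnion₂.1 (Set.eq_univ_iff_forall.1 ht z)
  refine ⟨w z₀ n, mem_cylinder_iff_eq.2 ?_, (cylinder_anti _ ?_).trans (hmU z₀ n)⟩
  · rw [mem_cylinder_iff_eq.1 (hwz z₀ n), mem_cylinder_iff_eq.1 hzz₀]
  · exact le_max_of_le_right (Finset.le_sup (f := fun z => m z n) hz₀t)

end Cylinders

namespace CantorSMZ

lemma cyl_eq_cylinder (s : List (ZMod 2)) : cyl s = cylinder (fun i => s.getD i 0) s.length :=
  rfl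

/-- If `X` has strong measure zero then for every dense open `U ⊆ 2^ω` there is `x` with
`x + X ⊆ U`. -/
theorem smz_translate_into_dense_open (X : Set Cantor) (hX : SMZ X)
    (U : Set Cantor) (hU : IsOpen U) (hUd : Dense U) :
    ∃ x : Cantor, (fun y => x + y) '' X ⊆ U := by
  choose m hm hmU using hUd.exists_uniform_cylinder_subset_of_isOpen hU
  set n : ℕ → ℕ := fun k => m^[k] 0
  have hn_succ : ∀ k, n (k + 1) = m (n k) := fun k => Function.iterate_succ_apply' m k 0
  have hn : StrictMono n := strictMono_nat_of_lt_succ fun k => hn_succ k ▸ hm (n k)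
  obtain ⟨σ, hσ, hXσ⟩ := hX fun k => n (k + 1)
  obtain ⟨x, hx⟩ := exists_add_cylinder_subset hn (fun k => hn_succ k ▸ hmU (n k))
    fun k i => (σ k).getD i 0
  refine ⟨x, ?_⟩
  rintro _ ⟨y, hy, rfl⟩
  obtain ⟨k, hk⟩ := Set.mem_iUnion.1 (hXσ hy)
  rw [cyl_eq_cylinder, hσ] at hk
  exact hx k ⟨y, hk, rfl⟩

end CantorSMZ
end

section
/- If for every meager set F ⊆ 2^ω there exists x ∈ 2^ω with (x + X) ∩ F = ∅, then X has strong measure zero. (One direction of the Galvin–Mycielski–Solovay theorem.) -/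
/-!
Fix an enumeration of all finite binary strings. Given `f`, choose block ends `K 0 < K 1 < ⋯`
growing so fast that each string of length `K n` occurs at some index `m` with `f m ≤ K (n + 1)`.
The points vanishing on no block `[K n, K (n + 1))` form a meager set; translating it off `X` by `x`
means that every `y ∈ X` agrees with `x` on some block, since `x + y = 0` forces `y = x` mod 2.
Then `y` lies in the cylinder of length `f m` around the point that starts with `y ↾ K n` and
continues as `x`, where `m` is an index of `y ↾ K n`.
-/

open MeasureTheory

namespace CantorSMZ

open Set Filter Topology

theorem isMeagre_compl_iUnion_pi_singleton {ι α : Type*} [TopologicalSpace α] [DiscreteTopology α]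
    {B : ℕ → Set ι} (hB_finite : ∀ n, (B n).Finite) (hB_eventually : ∀ i, ∀ᶠ n in atTop, i ∉ B n)
    (a : ι → α) : IsMeagre (⋃ n, (B n).pi fun i => {a i})ᶜ := by
  classical
  rw [IsMeagre, compl_compl]
  refine residual_of_dense_open
    (isOpen_iUnion fun n => isOpen_set_pi (hB_finite n) fun i _ => isOpen_discrete _) fun z => ?_
  -- `z` is the limit of the points obtained by overwriting it with `a` on the block `B n`.
  refine mem_closure_of_tendsto (f := fun n => (B n).piecewise a z) (b := atTop) ?_
    (Eventually.of_forall fun n => mem_iUnion.2 ⟨n, fun i hi => by simp [hi]⟩)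
  refine tendsto_pi_nhds.2 fun i => tendsto_const_nhds.congr' ?_
  filter_upwards [hB_eventually i] with n hn
  exact (piecewise_eq_of_notMem _ _ _ hn).symm

theorem exists_strictMono_forall_le_of_finite {β : Type*} {S : ℕ → Set β}
    (hS : ∀ k, (S k).Finite) (g : β → ℕ) :
    ∃ K : ℕ → ℕ, StrictMono K ∧ ∀ n, ∀ b ∈ S (K n), g b ≤ K (n + 1) := by
  choose c hc using fun k => ((hS k).image g).bddAbove
  let K : ℕ → ℕ := fun n => (fun k => k + 1 + c k)^[n] 0
  have hK_succ (n : ℕ) : K (n + 1) = K n + 1 + c (K n) := Function.iterate_succ_apply' ..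
  refine ⟨K, strictMono_nat_of_lt_succ fun n => by rw [hK_succ]; omega, fun n b hb => ?_⟩
  have := hc _ (mem_image_of_mem g hb)
  rw [hK_succ]
  omega

theorem mem_cyl_ofFn_iff {z : Cantor} {l : ℕ} {w : ℕ → ZMod 2} :
    z ∈ cyl (List.ofFn fun i : Fin l => w i) ↔ ∀ i < l, z i = w i := by
  simp +contextual [cyl, List.getD_eq_getElem?_getD]

theorem getD_ofFn_eq_of_eqOn {y x : Cantor} {k k' i : ℕ} (hyx : EqOn y x (Ico k k')) (hi : i < k') :
    (List.ofFn fun j : Fin k => y j).getD i (x i) = y i := by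
  rw [List.getD_eq_getElem?_getD, List.getElem?_ofFn]
  split_ifs with hik
  · rfl
  · exact (hyx ⟨not_lt.1 hik, hi⟩).symm

theorem smz_of_forall_strictMono_exists_eqOn {X : Set Cantor}
    (hX : ∀ K : ℕ → ℕ, StrictMono K → ∃ x : Cantor, ∀ y ∈ X, ∃ n, EqOn y x (Ico (K n) (K (n + 1)))) :
    SMZ X := by
  intro f
  obtain ⟨guess, hguess⟩ := exists_surjective_nat (List (ZMod 2))
  obtain ⟨K, hK, hfK⟩ := exists_strictMono_forall_le_of_finite (List.finite_length_eq (ZMod 2))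
    (f ∘ Function.surjInv hguess)
  obtain ⟨x, hx⟩ := hX K hK
  refine ⟨fun m => List.ofFn fun i : Fin (f m) => (guess m).getD i (x i), fun m => List.length_ofFn,
    fun y hy => ?_⟩
  obtain ⟨n, hyx⟩ := hx y hy
  let pre := List.ofFn fun j : Fin (K n) => y j
  have hf : f (Function.surjInv hguess pre) ≤ K (n + 1) := hfK n pre List.length_ofFn
  refine mem_iUnion.2 ⟨Function.surjInv hguess pre,
    (mem_cyl_ofFn_iff (w := fun i => (guess _).getD i (x i))).2 fun i hi => ?_⟩
  rw [Function.surjInv_eq hguess, getD_ofFn_eq_of_eqOn hyx (hi.trans_le hf)]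

/-- Galvin–Mycielski–Solovay, one direction: if every meager set can be translated off
`X`, then `X` has strong measure zero. -/
theorem gms_hard_direction (X : Set Cantor)
    (h : ∀ F : Set Cantor, IsMeagre F → ∃ x : Cantor, ((fun y => x + y) '' X) ∩ F = ∅) :
    SMZ X := by
  refine smz_of_forall_strictMono_exists_eqOn fun K hK => ?_
  have hblocks (i : ℕ) : ∀ᶠ n in atTop, i ∉ Ico (K n) (K (n + 1)) :=
    (hK.tendsto_atTop.eventually_gt_atTop i).mono fun n hn hi => (hn.trans_le hi.1).false
  obtain ⟨x, hx⟩ := h _ (isMeagre_compl_iUnion_pi_singleton (fun n => finite_Ico _ _) hblocks 0)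
  refine ⟨x, fun y hy => ?_⟩
  have hxy : x + y ∈ ⋃ n, (Ico (K n) (K (n + 1))).pi fun i => {(0 : Cantor) i} := by
    by_contra hxy
    exact (eq_empty_iff_forall_notMem.1 hx) (x + y) ⟨mem_image_of_mem _ hy, hxy⟩
  obtain ⟨n, hn⟩ := mem_iUnion.1 hxy
  exact ⟨n, fun i hi => (CharTwo.add_eq_zero.1 (hn i hi)).symm⟩

end CantorSMZ
end

section
/- For finite binary strings s, t of equal length, an increasing function f : ω → ω, and z ∈ 2^ω, the set H = { x ∈ 2^ω : x extends s and the sequence n ↦ x(f(n)) extends z↾|t| + t } has measure at most 2^{|f⁻¹[{0,…,|s|−1}]|} / 2^{2|s|}, where f⁻¹[{0,…,|s|−1}] = { n < |t| : f(n) < |s| } and + is coordinatewise addition mod 2 on strings. -/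
open MeasureTheory
open scoped ENNReal

namespace CantorSMZ

instance : Lb.IsAddLeftInvariant := by unfold Lb; infer_instance

lemma Lb_univ : Lb Set.univ = 1 := by
  have : Lb ((⊤ : TopologicalSpace.PositiveCompacts Cantor) : Set Cantor) = 1 :=
    Measure.addHaarMeasure_self
  simpa using this

lemma zmod2_flip : ∀ u v : ZMod 2, (u = v + 1 ↔ 1 + u = v) := by decide
lemma zmod2_ne : ∀ u : ZMod 2, u ≠ u + 1 := by decide
lemma zmod2_of_ne : ∀ u v : ZMod 2, u ≠ v → u = v + 1 := by decide

lemma meas_cube (E : Finset ℕ) (g : ℕ → ZMod 2) :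
    MeasurableSet {x : Cantor | ∀ i ∈ E, x i = g i} := by
  have : {x : Cantor | ∀ i ∈ E, x i = g i} = ⋂ i ∈ E, (fun x : Cantor => x i) ⁻¹' {g i} := by
    ext x; simp
  rw [this]
  exact MeasurableSet.biInter E.countable_toSet fun i _ =>
    (measurable_pi_apply i) (measurableSet_singleton _)

lemma Lb_cube (E : Finset ℕ) : ∀ g : ℕ → ZMod 2,
    Lb {x : Cantor | ∀ i ∈ E, x i = g i} = (2 ^ E.card)⁻¹ := by
  classical
  induction E using Finset.induction_on with
  | empty =>
    intro g
    have : {x : Cantor | ∀ i ∈ (∅ : Finset ℕ), x i = g i} = Set.univ :=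
      Set.eq_univ_iff_forall.2 (by simp)
    simp [this, Lb_univ]
  | @insert a E ha ih =>
    intro g
    set c : Cantor := fun i => if i = a then 1 else 0 with hc
    set g' : ℕ → ZMod 2 := fun i => if i = a then g a + 1 else g i with hg'
    set A := {x : Cantor | ∀ i ∈ insert a E, x i = g i} with hA
    set A' := {x : Cantor | ∀ i ∈ insert a E, x i = g' i} with hA'def
    have hA' : A' = (c + ·) ⁻¹' A := by
      ext x
      simp only [hA, hA'def, Set.mem_preimage, Set.mem_setOf_eq, Finset.mem_insert]
      constructor
      · rintro h i (rfl | hi)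
        · have h1 := h i (Or.inl rfl)
          simp only [hg', if_pos rfl] at h1
          simpa [hc, Pi.add_apply] using (zmod2_flip (x i) (g i)).mp h1
        · have h1 := h i (Or.inr hi)
          have hia : i ≠ a := fun h' => ha (h' ▸ hi)
          simp only [hg', if_neg hia] at h1
          simpa [hc, Pi.add_apply, if_neg hia] using h1
      · rintro h i (rfl | hi)
        · have h1 := h i (Or.inl rfl)
          simp only [hc, Pi.add_apply, if_pos rfl] at h1
          simp only [hg', if_pos rfl]
          exact (zmod2_flip (x i) (g i)).mpr h1
        · have h1 := h i (Or.inr hi)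
          have hia : i ≠ a := fun h' => ha (h' ▸ hi)
          simp only [hc, Pi.add_apply, if_neg hia, zero_add] at h1
          simpa [hg', if_neg hia] using h1
    have hLA' : Lb A' = Lb A := by rw [hA']; exact measure_preimage_add Lb c A
    -- A ∪ A' = B, disjoint
    set B := {x : Cantor | ∀ i ∈ E, x i = g i} with hB
    have hdisj : Disjoint A A' := by
      rw [Set.disjoint_left]
      intro x hx hx'
      have h1 : x a = g a := hx a (Finset.mem_insert_self a E)
      have h2 : x a = g a + 1 := by
        have := hx' a (Finset.mem_insert_self a E); simpa [hg'] using this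
      rw [h1] at h2
      exact zmod2_ne _ h2
    have hunion : A ∪ A' = B := by
      ext x
      simp only [hA, hA'def, hB, Set.mem_union, Set.mem_setOf_eq, Finset.mem_insert]
      constructor
      · rintro (h | h) i hi
        · exact h i (Or.inr hi)
        · have hia : i ≠ a := fun h' => ha (h' ▸ hi)
          have := h i (Or.inr hi); simpa [hg', if_neg hia] using this
      · intro h
        by_cases hxa : x a = g a
        · left; rintro i (rfl | hi); exacts [hxa, h i hi]
        · right; rintro i (rfl | hi)
          · simp only [hg', if_pos rfl]
            exact zmod2_of_ne _ _ hxa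
          · have hia : i ≠ a := fun h' => ha (h' ▸ hi)
            simp only [hg', if_neg hia]; exact h i hi
    have hBsum : Lb B = Lb A + Lb A' := by
      rw [← hunion]
      exact measure_union hdisj (meas_cube _ _)
    rw [ih g, hLA'] at hBsum
    have h2 : Lb A + Lb A = (2 : ℝ≥0∞) * Lb A := (two_mul _).symm
    rw [h2] at hBsum
    have key : Lb A = 2⁻¹ * (2 ^ E.card)⁻¹ := by
      rw [hBsum, ← mul_assoc, ENNReal.inv_mul_cancel (by norm_num) (by norm_num), one_mul]
    rw [key, Finset.card_insert_of_notMem ha, pow_succ,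
      ENNReal.mul_inv (by norm_num) (by norm_num), mul_comm]
/-- The key measure estimate: for strings `s, t` of equal length, increasing `f` and
`z ∈ 2^ω`, the set `H = [s] ∩ {x : x_f extends z↾|t| + t}` has measure at most
`2^{|f⁻¹[|s|]|} / 2^{2|s|}`. -/
theorem measure_H_le (s t : List (ZMod 2)) (hst : s.length = t.length)
    (f : ℕ → ℕ) (hf : StrictMono f) (z : Cantor) :
    Lb {x : Cantor | x ∈ cyl s ∧ ∀ n < t.length, x (f n) = z n + t.getD n 0}
      ≤ 2 ^ ((Finset.range t.length).filter (fun n => f n < s.length)).card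
        / 2 ^ (2 * s.length) := by
  classical
  set k := ((Finset.range t.length).filter (fun n => f n < s.length)).card with hk
  set N := (Finset.range t.length).filter (fun n => ¬ f n < s.length) with hN
  set E := Finset.range s.length ∪ N.image f with hE
  set g : ℕ → ZMod 2 := fun i =>
    if i < s.length then s.getD i 0
    else z (Function.invFun f i) + t.getD (Function.invFun f i) 0 with hg
  have hsub : {x : Cantor | x ∈ cyl s ∧ ∀ n < t.length, x (f n) = z n + t.getD n 0}
      ⊆ {x : Cantor | ∀ i ∈ E, x i = g i} := by
    rintro x ⟨hxs, hxt⟩ i hi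
    rw [hE, Finset.mem_union] at hi
    rcases hi with hi' | hi'
    · have hlt : i < s.length := Finset.mem_range.mp hi'
      rw [hg]; simp only [if_pos hlt]
      exact hxs i hlt
    · obtain ⟨n, hn, rfl⟩ := Finset.mem_image.mp hi'
      rw [hN, Finset.mem_filter, Finset.mem_range] at hn
      have hge : ¬ f n < s.length := hn.2
      rw [hg]; simp only [if_neg hge, Function.leftInverse_invFun hf.injective n]
      exact hxt n hn.1
  have hcard : E.card = s.length + (t.length - k) := by
    rw [hE, Finset.card_union_of_disjoint, Finset.card_range,
      Finset.card_image_of_injective _ hf.injective]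
    · congr 1
      have := Finset.card_filter_add_card_filter_not
        (s := Finset.range t.length) (p := fun n => f n < s.length)
      simp only [Finset.card_range] at this
      have hNc : k + N.card = t.length := by
        rw [hk, hN]; simpa using this
      omega
    · rw [Finset.disjoint_left]
      intro i hi1 hi2
      rw [Finset.mem_range] at hi1
      obtain ⟨n, hn, rfl⟩ := Finset.mem_image.mp hi2
      rw [hN, Finset.mem_filter] at hn
      exact hn.2 hi1
  have hk_le : k ≤ t.length := by
    rw [hk]
    exact le_trans (Finset.card_filter_le _ _) (by simp)
  calc Lb {x : Cantor | x ∈ cyl s ∧ ∀ n < t.length, x (f n) = z n + t.getD n 0}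
      ≤ Lb {x : Cantor | ∀ i ∈ E, x i = g i} := measure_mono hsub
    _ = (2 ^ E.card)⁻¹ := Lb_cube E g
    _ = 2 ^ k / 2 ^ (2 * s.length) := by
        have hexp : 2 * s.length = k + E.card := by omega
        rw [hexp, pow_add, div_eq_mul_inv,
          ENNReal.mul_inv (by norm_num) (by norm_num),
          ← mul_assoc, ENNReal.mul_inv_cancel (by positivity) (by norm_num), one_mul]

end CantorSMZ
end

section
/- Let s_n, t_n ∈ 2^{<ω} with |s_n| = |t_n| and ∑_n 2^{−2|s_n|} < ∞, let f : ω → ω be strictly increasing satisfying conditions (a) and (b) as below, and let z ∈ 2^ω. Then the set { x ∈ 2^ω : (x, x_f + z) ∈ ⋂_m ⋃_{n ≥ m} [s_n] × [t_n] } has measure zero, where x_f(n) = x(f(n)) and + is coordinatewise addition mod 2. -/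
/-! The event `{x : x ∈ [s_n], x_f + z ∈ [t_n]}` fixes the coordinates below `|s_n|` and the
coordinates `f k`, `k < |s_n|`. If `|s_n| ≤ f M`, at most `M` of the latter lie below `|s_n|`, so
at least `2|s_n| - M` coordinates are fixed and, by translation invariance, the event has measure
at most `2^M 4^{-|s_n|}`. For `f m < n ≤ f (m + 1)` condition (a) allows `M = m + 2`, and then
condition (b) bounds the total measure of this block of events by `4^{-|s_m|}`. Hence the measures
are summable and Borel–Cantelli applies. -/


open MeasureTheory

open Finset Filter
open scoped ENNReal

section FiniteCoordinates

variable {ι α : Type*} [AddGroup α] [Fintype α] [MeasurableSpace α] [DiscreteMeasurableSpace α]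
  {μ : Measure (ι → α)} [μ.IsAddLeftInvariant] [IsProbabilityMeasure μ]

theorem measure_eqOn_finset (F : Finset ι) (w : ι → α) :
    μ {x | Set.EqOn x w F} = ((Fintype.card α : ℝ≥0∞) ^ #F)⁻¹ := by
  classical
  -- The fibres of the restriction to `F` are translates of each other and partition the space.
  let r : (ι → α) → (F → α) := fun x i => x i
  have hconst (p : F → α) : μ (r ⁻¹' {p}) = μ {x | Set.EqOn x w F} := by
    obtain ⟨v, rfl⟩ : ∃ v, r v = p :=
      ⟨fun i => if h : i ∈ F then p ⟨i, h⟩ else 0, by ext; simp [r]⟩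
    rw [← measure_preimage_add μ (v - w)]
    congr 1
    ext x
    simp only [Set.mem_preimage, Set.mem_singleton_iff, funext_iff, Subtype.forall, r,
      Pi.add_apply, Pi.sub_apply, Set.mem_ofPred_eq, Set.EqOn, mem_coe]
    exact forall₂_congr fun i _ => by conv_rhs => rw [← add_right_inj (v i - w i), sub_add_cancel]
  have htotal : ∑ p : F → α, μ (r ⁻¹' {p}) = 1 := by
    rw [sum_measure_preimage_singleton (f := r) _ fun p _ => F.measurable_restrict
      (measurableSet_singleton p)]
    simp
  simp only [hconst, sum_const, card_univ, Fintype.card_fun, Fintype.card_coe, nsmul_eq_mul,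
    Nat.cast_pow] at htotal
  exact ENNReal.eq_inv_of_mul_eq_one_left (by rwa [mul_comm])

theorem measure_le_of_eqOn_finset {S : Set (ι → α)} (F : Finset ι)
    (hS : ∀ x ∈ S, ∀ y ∈ S, Set.EqOn x y F) :
    μ S ≤ ((Fintype.card α : ℝ≥0∞) ^ #F)⁻¹ := by
  rcases S.eq_empty_or_nonempty with rfl | ⟨w, hw⟩
  · simp
  · rw [← measure_eqOn_finset (μ := μ) F w]
    exact measure_mono fun x hx => hS x hx w hw

end FiniteCoordinates

theorem StrictMono.two_mul_le_card_range_union_image {f : ℕ → ℕ} (hf : StrictMono f)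
    {L M : ℕ} (hL : L ≤ f M) : 2 * L ≤ #(range L ∪ (range L).image f) + M := by
  have hinter : range L ∩ (range L).image f ⊆ (range M).image f := by
    intro y hy
    obtain ⟨hyL, k, -, rfl⟩ := by simpa using hy
    exact mem_image_of_mem f (mem_range.2 (hf.lt_iff_lt.1 (hyL.trans_le hL)))
  have := card_union_add_card_inter (range L) ((range L).image f)
  have := (card_le_card hinter).trans card_image_le
  rw [card_image_of_injective _ hf.injective, card_range] at *
  omega

theorem ENNReal.tsum_ne_top_of_blockwise_le {a b c : ℕ → ℝ≥0∞} {f : ℕ → ℕ} (hf : StrictMono f)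
    (ha₀ : ∀ n ≤ f 0, a n ≠ ∞) (ha : ∀ m n, f m < n → n ≤ f (m + 1) → a n ≤ c m * b n)
    (hb : ∀ m, c m * ∑' n, (if f m ≤ n then b n else 0) ≤ b m) (hsum : ∑' n, b n ≠ ∞) :
    ∑' n, a n ≠ ∞ := by
  set head : Finset ℕ := range (f 0 + 1)
  have hle (n : ℕ) :
      a n ≤ (head : Set ℕ).indicator a n + ∑' m, c m * (if f m ≤ n then b n else 0) := by
    by_cases hn : n ≤ f 0
    · rw [Set.indicator_of_mem (by simpa [head] using Nat.lt_succ_of_le hn)]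
      exact le_self_add
    · obtain ⟨m, hmn, hnm⟩ := hf.exists_between_of_tendsto_atTop hf.tendsto_atTop (not_le.1 hn)
      calc a n ≤ c m * (if f m ≤ n then b n else 0) := by
            rw [if_pos hmn.le]; exact ha m n hmn hnm
        _ ≤ ∑' m, c m * (if f m ≤ n then b n else 0) := ENNReal.le_tsum m
        _ ≤ _ := le_add_self
  refine ne_top_of_le_ne_top ?_ (ENNReal.tsum_le_tsum hle)
  rw [ENNReal.tsum_add, ← sum_eq_tsum_indicator, ENNReal.tsum_comm]
  simp only [ENNReal.tsum_mul_left]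
  refine ENNReal.add_ne_top.2 ⟨?_, ne_top_of_le_ne_top hsum (ENNReal.tsum_le_tsum hb)⟩
  exact ENNReal.sum_ne_top.2 fun n hn => ha₀ n (Nat.lt_succ_iff.1 (mem_range.1 hn))

theorem ENNReal.ofReal_one_div_two_pow (k : ℕ) : ENNReal.ofReal ((1 / 2 : ℝ) ^ k) = 2⁻¹ ^ k := by
  rw [ENNReal.ofReal_pow (by norm_num), one_div, ENNReal.ofReal_inv_of_pos two_pos,
    ENNReal.ofReal_ofNat]

theorem ENNReal.tsum_ite_ofReal {β : Type*} {r : β → ℝ} (hr : ∀ n, 0 ≤ r n) (hsum : Summable r)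
    (p : β → Prop) [DecidablePred p] :
    ∑' n, (if p n then ENNReal.ofReal (r n) else 0) =
      ENNReal.ofReal (∑' n, if p n then r n else 0) := by
  have hnonneg (n : β) : 0 ≤ if p n then r n else 0 := by split_ifs <;> simp [hr]
  rw [ENNReal.ofReal_tsum_of_nonneg hnonneg
    (hsum.of_nonneg_of_le hnonneg fun n => by split_ifs <;> simp [hr])]
  simp [apply_ite ENNReal.ofReal]

namespace CantorSMZ

instance : Lb.IsAddHaarMeasure := Measure.isAddHaarMeasure_addHaarMeasure ⊤

instance : IsProbabilityMeasure Lb := ⟨Measure.addHaarMeasure_self⟩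

theorem measure_cyl_inter_shift_preimage_le {μ : Measure Cantor} [μ.IsAddLeftInvariant]
    [IsProbabilityMeasure μ] {f : ℕ → ℕ} (hf : StrictMono f) {s t : List (ZMod 2)}
    (hst : s.length = t.length) (z : Cantor) {M : ℕ} (hM : s.length ≤ f M) :
    μ {x | x ∈ cyl s ∧ (fun k => x (f k) + z k) ∈ cyl t} ≤ 2 ^ M * 2⁻¹ ^ (2 * s.length) := by
  set S := {x | x ∈ cyl s ∧ (fun k => x (f k) + z k) ∈ cyl t}
  set F := range s.length ∪ (range s.length).image f
  have hagree : ∀ x ∈ S, ∀ y ∈ S, Set.EqOn x y F := by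
    rintro x ⟨hxs, hxt⟩ y ⟨hys, hyt⟩ i hi
    rcases mem_union.1 hi with hi | hi
    · exact (hxs i (mem_range.1 hi)).trans (hys i (mem_range.1 hi)).symm
    · obtain ⟨k, hk, rfl⟩ := mem_image.1 hi
      have hk : k < t.length := hst ▸ mem_range.1 hk
      exact add_right_cancel ((hxt k hk).trans (hyt k hk).symm)
  calc μ S ≤ ((Fintype.card (ZMod 2) : ℝ≥0∞) ^ #F)⁻¹ := measure_le_of_eqOn_finset F hagree
    _ = 2 ^ M * 2⁻¹ ^ (#F + M) := by
      rw [ZMod.card, Nat.cast_ofNat, ENNReal.inv_pow, pow_add, mul_left_comm, ← mul_pow,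
        ENNReal.mul_inv_cancel two_ne_zero ENNReal.ofNat_ne_top, one_pow, mul_one]
    _ ≤ 2 ^ M * 2⁻¹ ^ (2 * s.length) := by
      gcongr 2 ^ M * ?_
      exact pow_le_pow_of_le_one zero_le (by norm_num) (hf.two_mul_le_card_range_union_image hM)

/-- Under conditions (a) and (b), for every `z ∈ 2^ω` the set
`{x : (x, x_f + z) ∈ ⋂_m ⋃_{n ≥ m} [s_n] × [t_n]}` is null. -/
theorem limsup_null (s t : ℕ → List (ZMod 2)) (hst : ∀ n, (s n).length = (t n).length)
    (hsum : Summable fun n => ((1 : ℝ) / 2) ^ (2 * (s n).length))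
    (f : ℕ → ℕ) (hf : StrictMono f)
    (ha : ∀ n, ∀ j ≤ f n, (s j).length < f (n + 1))
    (hb : ∀ n, (∑' j : ℕ, if f n ≤ j then ((1 : ℝ) / 2) ^ (2 * (s j).length) else 0)
      ≤ ((1 : ℝ) / 2) ^ (2 * (s n).length) / 2 ^ (n + 2))
    (z : Cantor) :
    Lb {x : Cantor | ∀ m, ∃ n ≥ m,
        x ∈ cyl (s n) ∧ (fun k => x (f k) + z k) ∈ cyl (t n)} = 0 := by
  set r : ℕ → ℝ := fun n => (1 / 2 : ℝ) ^ (2 * (s n).length)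
  have hr : ∀ n, 0 ≤ r n := fun n => by positivity
  have hlimsup : {x : Cantor | ∀ m, ∃ n ≥ m,
      x ∈ cyl (s n) ∧ (fun k => x (f k) + z k) ∈ cyl (t n)} =
      limsup (fun n => {x | x ∈ cyl (s n) ∧ (fun k => x (f k) + z k) ∈ cyl (t n)}) atTop := by
    ext x
    simp only [mem_limsup_iff_frequently_mem, frequently_atTop, Set.mem_ofPred_eq]
  rw [hlimsup]
  refine measure_limsup_atTop_eq_zero <| ENNReal.tsum_ne_top_of_blockwise_le
    (b := fun n => ENNReal.ofReal (r n)) (c := fun m => 2 ^ (m + 2)) hf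
    (fun n _ => measure_ne_top _ _) (fun m n _ hn => ?_) (fun m => ?_) ?_
  · rw [ENNReal.ofReal_one_div_two_pow]
    exact measure_cyl_inter_shift_preimage_le hf (hst n) z (ha (m + 1) n hn).le
  · calc (2 : ℝ≥0∞) ^ (m + 2) * ∑' n, (if f m ≤ n then ENNReal.ofReal (r n) else 0)
        = ENNReal.ofReal (2 ^ (m + 2) * ∑' n, if f m ≤ n then r n else 0) := by
          rw [ENNReal.tsum_ite_ofReal hr hsum, ENNReal.ofReal_mul (by positivity),
            ENNReal.ofReal_pow zero_le_two, ENNReal.ofReal_ofNat]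
      _ ≤ ENNReal.ofReal (r m) :=
          ENNReal.ofReal_le_ofReal ((le_div_iff₀' (by positivity)).1 (hb m))
  · rw [← ENNReal.ofReal_tsum_of_nonneg hr hsum]
    exact ENNReal.ofReal_ne_top

end CantorSMZ
end
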